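/- Define, for ε > 0 and δ ∈ [0,1], the discrete distributions P⁰ and P¹ on {0,1,2,3} by P⁰(0)=δ, P⁰(1)=(1−δ)e^ε/(1+e^ε), P⁰(2)=(1−δ)/(1+e^ε), P⁰(3)=0 and P¹(0)=0, P¹(1)=(1−δ)/(1+e^ε), P¹(2)=(1−δ)e^ε/(1+e^ε), P¹(3)=δ. Then both P⁰ and P¹ are probability distributions, and for every subset S ⊆ {1,2} one has P⁰(S) ≤ e^ε·P¹(S) + δ and P¹(S) ≤ e^ε·P⁰(S) + δ; moreover P⁰({0}) − e^ε·P¹({0}) = δ. -/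

import Mathlib

/-- Canonical worst-case output distribution `P⁰` of an `(ε,δ)`-DP mechanism. -/
noncomputable def P0 (ε δ : ℝ) : Fin 4 → ℝ :=
  ![δ, (1 - δ) * Real.exp ε / (1 + Real.exp ε), (1 - δ) / (1 + Real.exp ε), 0]

/-- Canonical worst-case output distribution `P¹` of an `(ε,δ)`-DP mechanism. -/
noncomputable def P1 (ε δ : ℝ) : Fin 4 → ℝ :=
  ![0, (1 - δ) / (1 + Real.exp ε), (1 - δ) * Real.exp ε / (1 + Real.exp ε), δ]

/-!
Write `E = exp ε` and `a = (1 - δ) / (1 + E)`. Then `P⁰ = (δ, E a, a, 0)` and `P¹` is `P⁰` read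
backwards. On the outputs `1, 2` the two distributions differ pointwise by a factor in `[E⁻¹, E]`,
because `E ≥ 1`, so on subsets of `{1, 2}` they are even `(ε, 0)`-indistinguishable; the whole
defect `δ` sits on the outputs `0` and `3`.
-/

theorem Finset.sum_le_mul_sum_add {ι : Type*} {S : Finset ι} {p q : ι → ℝ} {c δ : ℝ}
    (h : ∀ o ∈ S, p o ≤ c * q o) (hδ : 0 ≤ δ) : ∑ o ∈ S, p o ≤ c * ∑ o ∈ S, q o + δ := by
  rw [Finset.mul_sum]
  exact le_add_of_le_of_nonneg (Finset.sum_le_sum h) hδ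

section

variable {ε δ : ℝ}

theorem P1_apply (o : Fin 4) : P1 ε δ o = P0 ε δ o.rev := by
  fin_cases o <;> rfl

theorem P0_nonneg (hδ0 : 0 ≤ δ) (hδ1 : δ ≤ 1) (o : Fin 4) : 0 ≤ P0 ε δ o := by
  have h1δ : 0 ≤ 1 - δ := by linarith
  have hden : 0 < 1 + Real.exp ε := by positivity
  fin_cases o
  · exact hδ0
  · exact div_nonneg (mul_nonneg h1δ (Real.exp_pos ε).le) hden.le
  · exact div_nonneg h1δ hden.le
  · exact le_rfl

theorem P1_nonneg (hδ0 : 0 ≤ δ) (hδ1 : δ ≤ 1) (o : Fin 4) : 0 ≤ P1 ε δ o := by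
  rw [P1_apply]
  exact P0_nonneg hδ0 hδ1 _

theorem sum_P0 : ∑ o, P0 ε δ o = 1 := by
  have hden : 1 + Real.exp ε ≠ 0 := by positivity
  simp only [P0, Fin.sum_univ_four, Matrix.cons_val]
  field_simp
  ring

theorem sum_P1 : ∑ o, P1 ε δ o = 1 := by
  simp only [P1_apply]
  exact (Equiv.sum_comp Fin.revPerm (P0 ε δ)).trans sum_P0

theorem P0_le_exp_mul_P1 (hε : 0 ≤ ε) (hδ1 : δ ≤ 1) {o : Fin 4}
    (ho : o ∈ ({1, 2} : Finset (Fin 4))) : P0 ε δ o ≤ Real.exp ε * P1 ε δ o := by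
  have hE : 1 ≤ Real.exp ε := Real.one_le_exp hε
  have ha : 0 ≤ (1 - δ) / (1 + Real.exp ε) := div_nonneg (by linarith) (by positivity)
  simp only [Finset.mem_insert, Finset.mem_singleton] at ho
  rcases ho with rfl | rfl
  · exact le_of_eq (by simp only [P0, P1, Matrix.cons_val]; ring)
  · show (1 - δ) / (1 + Real.exp ε) ≤ Real.exp ε * ((1 - δ) * Real.exp ε / (1 + Real.exp ε))
    calc (1 - δ) / (1 + Real.exp ε)
        ≤ (Real.exp ε * Real.exp ε) * ((1 - δ) / (1 + Real.exp ε)) :=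
          le_mul_of_one_le_left ha (one_le_mul_of_one_le_of_one_le hE hE)
      _ = _ := by ring

theorem P1_le_exp_mul_P0 (hε : 0 ≤ ε) (hδ1 : δ ≤ 1) {o : Fin 4}
    (ho : o ∈ ({1, 2} : Finset (Fin 4))) : P1 ε δ o ≤ Real.exp ε * P0 ε δ o := by
  have ho' : o.rev ∈ ({1, 2} : Finset (Fin 4)) := by
    simp only [Finset.mem_insert, Finset.mem_singleton] at ho ⊢
    rcases ho with rfl | rfl <;> decide
  simpa only [P1_apply, Fin.rev_rev] using P0_le_exp_mul_P1 hε hδ1 ho'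

end

theorem stmt14 (ε δ : ℝ) (hε : 0 < ε) (hδ0 : 0 ≤ δ) (hδ1 : δ ≤ 1) :
    ((∀ o, 0 ≤ P0 ε δ o) ∧ ∑ o, P0 ε δ o = 1)
    ∧ ((∀ o, 0 ≤ P1 ε δ o) ∧ ∑ o, P1 ε δ o = 1)
    ∧ (∀ S : Finset (Fin 4), S ⊆ {1, 2} →
        (∑ o ∈ S, P0 ε δ o ≤ Real.exp ε * ∑ o ∈ S, P1 ε δ o + δ
          ∧ ∑ o ∈ S, P1 ε δ o ≤ Real.exp ε * ∑ o ∈ S, P0 ε δ o + δ))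
    ∧ P0 ε δ 0 - Real.exp ε * P1 ε δ 0 = δ := by
  refine ⟨⟨P0_nonneg hδ0 hδ1, sum_P0⟩, ⟨P1_nonneg hδ0 hδ1, sum_P1⟩, fun S hS => ⟨?_, ?_⟩, ?_⟩
  · exact Finset.sum_le_mul_sum_add (fun o ho => P0_le_exp_mul_P1 hε.le hδ1 (hS ho)) hδ0
  · exact Finset.sum_le_mul_sum_add (fun o ho => P1_le_exp_mul_P0 hε.le hδ1 (hS ho)) hδ0
  · simp [P0, P1]
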